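/- Fix c ∈ ℂ. With variables u_ℓ and F = u_0(u_0 + c)(u_2 u_1 − u_{−1} u_{−2}) (the modified Narita–Itoh–Bogoyavlensky equation), the matrices M̂ = [[0, u_0, 0], [0, 0, u_0], [−(u_0 + c), 0, λ]] and Û = [[u_0(c(u_{−1} + u_1) + u_{−1}(u_{−2} + u_1)), 0, λ u_{−2} u_{−1}], [−λ u_{−1}(u_0 + c), c(u_{−2} u_{−1} + u_0 u_1) + u_0 u_{−1}(u_{−2} + u_1), λ² u_{−1}], [−λ²(u_0 + c), −λ u_0(u_1 + c), λ³ + u_{−1}(c(u_{−2} + u_0) + u_0(u_{−2} + u_1))]] satisfy det(M̂) ≠ 0 and D_t(M̂) = S(Û)·M̂ − M̂·Û, i.e. (M̂, Û) is a matrix Lax representation for the modified Narita–Itoh–Bogoyavlensky equation. -/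
import Mathlib


/-!
Setup: `K1` is the field of rational functions over `ℂ` in the commuting
variables `λ` (here `lam`) and `u_ℓ` (`ℓ : ℤ`), realized as the fraction field
of the multivariate polynomial ring.  `S1` is the shift automorphism `S`
(fixing `ℂ` and `λ`, sending `u_ℓ` to `u_{ℓ+1}`), and `Sz ℓ = S^ℓ`.
-/

set_option maxHeartbeats 1000000
set_option synthInstance.maxHeartbeats 400000

noncomputable section

open MvPolynomial

abbrev R1 : Type := MvPolynomial (Option ℤ) ℂ
abbrev K1 : Type := FractionRing R1

def lam : K1 := algebraMap R1 K1 (X none)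
def u (ℓ : ℤ) : K1 := algebraMap R1 K1 (X (some ℓ))

def shiftR1 : R1 ≃+* R1 :=
  (renameEquiv ℂ (Equiv.optionCongr (Equiv.addRight (1:ℤ)))).toRingEquiv

/-- The shift automorphism `S` of the field `K1`. -/
def S1 : RingAut K1 := IsFractionRing.ringEquivOfRingEquiv shiftR1

/-- `Sz ℓ = S^ℓ`. -/
def Sz (ℓ : ℤ) : K1 ≃+* K1 := S1 ^ ℓ

lemma shiftR1_X_some (ℓ : ℤ) : shiftR1 (X (some ℓ)) = X (some (ℓ+1)) := by
  simp [shiftR1, renameEquiv]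

lemma shiftR1_X_none : shiftR1 (X none) = X none := by
  simp [shiftR1, renameEquiv]

lemma shiftR1_C (c : ℂ) : shiftR1 (C c) = C c := by
  simp [shiftR1, renameEquiv]

lemma S1_u (ℓ : ℤ) : S1 (u ℓ) = u (ℓ+1) := by
  simp [S1, u, IsFractionRing.ringEquivOfRingEquiv_algebraMap, shiftR1_X_some]

lemma S1_lam : S1 lam = lam := by
  simp [S1, lam, IsFractionRing.ringEquivOfRingEquiv_algebraMap, shiftR1_X_none]

lemma algC (c : ℂ) : algebraMap ℂ K1 c = algebraMap R1 K1 (C c) := by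
  rw [IsScalarTower.algebraMap_apply ℂ R1 K1]; rfl

lemma S1_C (c : ℂ) : S1 (algebraMap ℂ K1 c) = algebraMap ℂ K1 c := by
  rw [algC, S1, IsFractionRing.ringEquivOfRingEquiv_algebraMap, shiftR1_C]

lemma Sz_one : Sz 1 = S1 := by simp [Sz]

lemma u_ne (ℓ : ℤ) : u ℓ ≠ 0 := by
  rw [u, Ne, IsFractionRing.to_map_eq_zero_iff]
  exact X_ne_zero _

lemma uc_ne (c : ℂ) : u 0 + algebraMap ℂ K1 c ≠ 0 := by
  rw [algC, u, ← map_add, Ne, IsFractionRing.to_map_eq_zero_iff]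
  intro h
  have := congrArg (MvPolynomial.eval (fun i => if i = some 0 then 1 - c else 0)) h
  simp at this

/-- the pair `(M̂, Û)` below is a matrix Lax representation for
the modified Narita–Itoh–Bogoyavlensky equation
`∂ₜ(u) = u_0(u_0 + c)(u_2 u_1 − u_{−1} u_{−2})`. -/
theorem statement15 (c : ℂ)
    -- the total derivative `D_t` for `F = u_0(u_0 + c)(u_2 u_1 − u_{−1} u_{−2})`:
    (Dt : Derivation ℂ K1 K1) (hDtlam : Dt lam = 0)
    (hDtu : ∀ ℓ : ℤ,
      Dt (u ℓ) = Sz ℓ (u 0 * (u 0 + algebraMap ℂ K1 c) * (u 2 * u 1 - u (-1) * u (-2)))) :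
    (!![0, u 0, 0; 0, 0, u 0; -(u 0 + algebraMap ℂ K1 c), 0, lam] :
        Matrix (Fin 3) (Fin 3) K1).det ≠ 0 ∧
    (!![0, u 0, 0; 0, 0, u 0; -(u 0 + algebraMap ℂ K1 c), 0, lam] :
        Matrix (Fin 3) (Fin 3) K1).map ⇑Dt =
      (!![u 0 * (algebraMap ℂ K1 c * (u (-1) + u 1) + u (-1) * (u (-2) + u 1)), 0,
            lam * u (-2) * u (-1);
          -(lam * u (-1) * (u 0 + algebraMap ℂ K1 c)),
            algebraMap ℂ K1 c * (u (-2) * u (-1) + u 0 * u 1) +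
              u 0 * u (-1) * (u (-2) + u 1), lam^2 * u (-1);
          -(lam^2 * (u 0 + algebraMap ℂ K1 c)), -(lam * u 0 * (u 1 + algebraMap ℂ K1 c)),
            lam^3 + u (-1) * (algebraMap ℂ K1 c * (u (-2) + u 0) + u 0 * (u (-2) + u 1))] :
          Matrix (Fin 3) (Fin 3) K1).map ⇑(Sz 1) *
        !![0, u 0, 0; 0, 0, u 0; -(u 0 + algebraMap ℂ K1 c), 0, lam] -
      !![0, u 0, 0; 0, 0, u 0; -(u 0 + algebraMap ℂ K1 c), 0, lam] *
        !![u 0 * (algebraMap ℂ K1 c * (u (-1) + u 1) + u (-1) * (u (-2) + u 1)), 0,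
             lam * u (-2) * u (-1);
           -(lam * u (-1) * (u 0 + algebraMap ℂ K1 c)),
             algebraMap ℂ K1 c * (u (-2) * u (-1) + u 0 * u 1) +
               u 0 * u (-1) * (u (-2) + u 1), lam^2 * u (-1);
           -(lam^2 * (u 0 + algebraMap ℂ K1 c)), -(lam * u 0 * (u 1 + algebraMap ℂ K1 c)),
             lam^3 + u (-1) * (algebraMap ℂ K1 c * (u (-2) + u 0) + u 0 * (u (-2) + u 1))] := by
  have hD0 : Dt (u 0) = u 0 * (u 0 + algebraMap ℂ K1 c) * (u 2 * u 1 - u (-1) * u (-2)) := by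
    simpa [Sz] using hDtu 0
  constructor
  · have hdet : (!![0, u 0, 0; 0, 0, u 0; -(u 0 + algebraMap ℂ K1 c), 0, lam] :
        Matrix (Fin 3) (Fin 3) K1).det = -(u 0 * u 0 * (u 0 + algebraMap ℂ K1 c)) := by
      rw [Matrix.det_fin_three]
      simp
      ring
    rw [hdet]
    exact neg_ne_zero.mpr (mul_ne_zero (mul_ne_zero (u_ne 0) (u_ne 0)) (uc_ne c))
  · ext i j
    fin_cases i <;> fin_cases j <;>
      simp [Matrix.mul_apply, Fin.sum_univ_three, Sz_one, S1_u, S1_lam, S1_C, hD0, hDtlam,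
        Derivation.map_algebraMap, Dt.leibniz, Matrix.vecHead, Matrix.vecTail] <;>
      ring
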